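/- Let x̃ᵢ = min{xᵢ, x*} for some x* ≥ 0 and let p̃ = Σ_{i : xᵢ ≥ x*} p̄ᵢ. Then the capacity curve of the truncated fleet satisfies: Ω_{p̄,x̃}(p) = Ω_{p̄,x}(p) for all p ≥ p̃, and Ω_{p̄,x̃}(p) = Ω_{p̄,x}(p̃) + (p̃ − p)·x* for all 0 ≤ p ≤ p̃. -/

import Mathlib

open MeasureTheory Set Finset

/-- The E-p transform of a signal `P`: the energy required above power rating `p`. -/
noncomputable def EpTransform (P : ℝ → ℝ) (p : ℝ) : ℝ :=
  ∫ t in Set.Ioi (0:ℝ), max (P t - p) 0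

/-- The worst-case reference signal `R_{p̄,x}(t) = Σᵢ p̄ᵢ·𝟙[0 ≤ t < xᵢ]`. -/
noncomputable def worstCase {n : ℕ} (pbar x : Fin n → ℝ) (t : ℝ) : ℝ :=
  ∑ i, if 0 ≤ t ∧ t < x i then pbar i else 0

/-- The discharging capacity curve `Ω_{p̄,x}`. -/
noncomputable def capacity {n : ℕ} (pbar x : Fin n → ℝ) (p : ℝ) : ℝ :=
  EpTransform (worstCase pbar x) p

/-! Truncating at `x*` cuts the signal `R_{p̄,x}` off at time `x*`. Before `x*` every unit with
`xᵢ ≥ x*` is still discharging, so `R ≥ p̃` there, and after `x*` only units with `xᵢ > x*`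
remain, so `R ≤ p̃`. Hence above level `p̃` the cut-off removes nothing, while below it the
truncated transform is `∫₀^{x*} (R - p)`, which exceeds `∫₀^{x*} (R - p̃) = Ω_{p̄,x}(p̃)` by
`(p̃ - p)·x*`. -/

lemma worstCase_eq_sum_indicator {n : ℕ} (pbar x : Fin n → ℝ) :
    worstCase pbar x = ∑ i, (Ico 0 (x i)).indicator (fun _ => pbar i) := by
  ext t
  simp only [worstCase, Finset.sum_apply, Set.indicator, Set.mem_Ico]

lemma integrable_worstCase {n : ℕ} (pbar x : Fin n → ℝ) : Integrable (worstCase pbar x) := by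
  rw [worstCase_eq_sum_indicator]
  exact integrable_finsetSum' _ fun i _ =>
    (integrable_indicator_iff measurableSet_Ico).2 (integrableOn_const measure_Ico_lt_top.ne)

lemma worstCase_min_eq_indicator {n : ℕ} (pbar x : Fin n → ℝ) (a : ℝ) :
    worstCase pbar (fun i => min (x i) a) = (Iio a).indicator (worstCase pbar x) := by
  ext t
  by_cases ht : t ∈ Iio a
  · simp [worstCase, mem_Iio.1 ht]
  · rw [Set.indicator_of_notMem ht]
    exact Finset.sum_eq_zero fun i _ => if_neg fun h => ht (h.2.trans_le (min_le_right _ _))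

section Threshold

variable {n : ℕ} {pbar : Fin n → ℝ} (x : Fin n → ℝ) {a t : ℝ}

lemma worstCase_le_of_le (hpbar : ∀ i, 0 ≤ pbar i) (ht : a ≤ t) :
    worstCase pbar x t ≤ ∑ i ∈ univ.filter (fun i => a ≤ x i), pbar i := by
  rw [Finset.sum_filter]
  refine Finset.sum_le_sum fun i _ => ?_
  split_ifs with h₁ h₂
  exacts [le_rfl, absurd (ht.trans h₁.2.le) h₂, hpbar i, le_rfl]

lemma le_worstCase_of_lt (hpbar : ∀ i, 0 ≤ pbar i) (ht₀ : 0 ≤ t) (ht : t < a) :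
    ∑ i ∈ univ.filter (fun i => a ≤ x i), pbar i ≤ worstCase pbar x t := by
  rw [Finset.sum_filter]
  refine Finset.sum_le_sum fun i _ => ?_
  split_ifs with h₁ h₂
  exacts [le_rfl, absurd ⟨ht₀, ht.trans_le h₁⟩ h₂, hpbar i, le_rfl]

end Threshold

section EpTransform

variable {P : ℝ → ℝ} {a p q : ℝ}

lemma epTransform_indicator_Iio_of_tail_le (hp : 0 ≤ p) (htail : ∀ t, a ≤ t → P t ≤ p) :
    EpTransform ((Iio a).indicator P) p = EpTransform P p := by
  refine setIntegral_congr_fun measurableSet_Ioi fun t _ => ?_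
  by_cases ht : t ∈ Iio a
  · rw [Set.indicator_of_mem ht]
  · rw [Set.indicator_of_notMem ht, zero_sub, max_eq_right (by linarith),
      max_eq_right (by linarith [htail t (not_lt.1 ht)])]

lemma epTransform_eq_setIntegral_Ioo_of_tail_le (htail : ∀ t, a ≤ t → P t ≤ q) :
    EpTransform P q = ∫ t in Ioo 0 a, max (P t - q) 0 := by
  have hcut : (Iio a).indicator (fun t => max (P t - q) 0) = fun t => max (P t - q) 0 := by
    refine indicator_eq_self.2 fun t ht => ?_
    by_contra hta
    exact ht (max_eq_right (by linarith [htail t (not_lt.1 hta)]))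
  rw [EpTransform, ← Ioi_inter_Iio, ← setIntegral_indicator measurableSet_Iio, hcut]

lemma epTransform_indicator_Iio_of_le_of_le (ha : 0 ≤ a) (hP : IntegrableOn P (Ioo 0 a))
    (hhead : ∀ t ∈ Ioo 0 a, q ≤ P t) (htail : ∀ t, a ≤ t → P t ≤ q) (hp : 0 ≤ p) (hpq : p ≤ q) :
    EpTransform ((Iio a).indicator P) p = EpTransform P q + (q - p) * a := by
  have hhead_sub : ∀ r ≤ q, ∫ t in Ioo 0 a, max (P t - r) 0 = (∫ t in Ioo 0 a, P t) - r * a := by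
    intro r hr
    rw [setIntegral_congr_fun measurableSet_Ioo fun t ht => max_eq_left (by linarith [hhead t ht]),
      integral_sub hP (integrableOn_const measure_Ioo_lt_top.ne), setIntegral_const,
      Real.volume_real_Ioo_of_le ha, sub_zero, smul_eq_mul, mul_comm]
  have htail_cut : ∀ t, a ≤ t → (Iio a).indicator P t ≤ p := fun t ht => by
    rw [Set.indicator_of_notMem (show t ∉ Iio a from not_lt.2 ht)]
    exact hp
  rw [epTransform_eq_setIntegral_Ioo_of_tail_le htail_cut,
    setIntegral_congr_fun (g := fun t => max (P t - p) 0) measurableSet_Ioo fun t ht => by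
      rw [Set.indicator_of_mem (show t ∈ Iio a from ht.2)],
    epTransform_eq_setIntegral_Ioo_of_tail_le htail, hhead_sub p hpq, hhead_sub q le_rfl]
  ring

end EpTransform

theorem truncated_capacity_general {n : ℕ} (pbar x : Fin n → ℝ)
    (hp : ∀ i, 0 < pbar i)
    (xs : ℝ) (hxs : 0 ≤ xs) :
    (∀ p : ℝ, (∑ i ∈ Finset.univ.filter (fun i => xs ≤ x i), pbar i) ≤ p →
        capacity pbar (fun i => min (x i) xs) p = capacity pbar x p) ∧
    (∀ p : ℝ, 0 ≤ p → p ≤ (∑ i ∈ Finset.univ.filter (fun i => xs ≤ x i), pbar i) →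
        capacity pbar (fun i => min (x i) xs) p =
          capacity pbar x (∑ i ∈ Finset.univ.filter (fun i => xs ≤ x i), pbar i)
            + ((∑ i ∈ Finset.univ.filter (fun i => xs ≤ x i), pbar i) - p) * xs) := by
  set ptil := ∑ i ∈ univ.filter (fun i => xs ≤ x i), pbar i
  have hpbar : ∀ i, 0 ≤ pbar i := fun i => (hp i).le
  have hhead : ∀ t ∈ Ioo 0 xs, ptil ≤ worstCase pbar x t := fun t ht =>
    le_worstCase_of_lt x hpbar ht.1.le ht.2
  have htail : ∀ t, xs ≤ t → worstCase pbar x t ≤ ptil := fun t ht =>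
    worstCase_le_of_le x hpbar ht
  simp only [capacity, worstCase_min_eq_indicator]
  refine ⟨fun p hp => ?_, fun p hp₀ hpq => ?_⟩
  · exact epTransform_indicator_Iio_of_tail_le ((Finset.sum_nonneg fun i _ => hpbar i).trans hp)
      fun t ht => (htail t ht).trans hp
  · exact epTransform_indicator_Iio_of_le_of_le hxs (integrable_worstCase pbar x).integrableOn
      hhead htail hp₀ hpq

/-- The capacity curve of the truncated fleet `x̃ᵢ = min{xᵢ, x*}` agrees with the original
capacity curve for `p ≥ p̃ = Σ_{i : xᵢ ≥ x*} p̄ᵢ`, and is affine with slope `-x*` below `p̃`. -/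
theorem truncated_capacity {n : ℕ} (pbar x : Fin n → ℝ)
    (hp : ∀ i, 0 < pbar i) (hx : ∀ i, 0 ≤ x i)
    (xs : ℝ) (hxs : 0 ≤ xs) :
    (∀ p : ℝ, (∑ i ∈ Finset.univ.filter (fun i => xs ≤ x i), pbar i) ≤ p →
        capacity pbar (fun i => min (x i) xs) p = capacity pbar x p) ∧
    (∀ p : ℝ, 0 ≤ p → p ≤ (∑ i ∈ Finset.univ.filter (fun i => xs ≤ x i), pbar i) →
        capacity pbar (fun i => min (x i) xs) p =
          capacity pbar x (∑ i ∈ Finset.univ.filter (fun i => xs ≤ x i), pbar i)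
            + ((∑ i ∈ Finset.univ.filter (fun i => xs ≤ x i), pbar i) - p) * xs) :=
  truncated_capacity_general pbar x hp xs hxs
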